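/- If every collection of K balls of rank radius ρ in GF(q^m)^n has union of volume at most B, and a code C with t uncovered vectors (t ≤ K) exists, then some vector y covers at least ⌈t·v(ρ)/B⌉ vectors uncovered by C, yielding a code C ∪ {y} with at most t − ⌈t·v(ρ)/B⌉ uncovered vectors. -/

import Mathlib

/-!
Let `U` be the set of the `t` uncovered vectors and `T` the union of the rank balls of radius `ρ`
around them; `|T| ≤ B` because `t ≤ K`. Counting the pairs `(u, y) ∈ U × T` with
`d(u, y) ≤ ρ` in two ways gives `∑_{y ∈ T} |U ∩ B(y, ρ)| = t · v(ρ)`, since every rank ball has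
volume `v(ρ)` by translation invariance. Hence the `y` maximising `|U ∩ B(y, ρ)|` covers at least
`t · v(ρ) / |T| ≥ t · v(ρ) / B` uncovered vectors, and only the rest stay uncovered by `C ∪ {y}`.
-/

/-- The rank weight of a vector `x ∈ GF(q^m)^n`: the dimension over `GF(q)` of the
`GF(q)`-span of the coordinates of `x`. -/
noncomputable def rankWeight (Fq : Type*) [Field Fq] {Fqm : Type*} [Field Fqm] [Algebra Fq Fqm]
    {n : ℕ} (x : Fin n → Fqm) : ℕ :=
  Module.finrank Fq (Submodule.span Fq (Set.range x))

open Finset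

section Counting

variable {α : Type*} [Fintype α]

theorem exists_card_mul_le_card_nbhd_mul [Nonempty α] (r : α → α → Prop) [DecidableRel r]
    (hr : ∀ x y, r x y → r y x) (U : Finset α) (v : ℕ) (hv : ∀ x ∈ U, #{y | r x y} = v) :
    ∃ y, #U * v ≤ #{z | ∃ u ∈ U, r z u} * #{x ∈ U | r x y} := by
  set T : Finset α := {z | ∃ u ∈ U, r z u}
  obtain ⟨y, -, hy⟩ := (univ : Finset α).exists_max_image (fun y ↦ #{x ∈ U | r x y})
    univ_nonempty
  refine ⟨y, ?_⟩
  have hball : ∀ x ∈ U, #(T.bipartiteAbove r x) = v := fun x hx ↦ by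
    rw [← hv x hx, bipartiteAbove]
    congr 1
    ext z
    simpa [T] using fun hxz ↦ ⟨x, hx, hr x z hxz⟩
  calc #U * v = ∑ x ∈ U, #(T.bipartiteAbove r x) := by
        rw [sum_congr rfl hball, sum_const, smul_eq_mul]
    _ = ∑ z ∈ T, #{x ∈ U | r x z} := sum_card_bipartiteAbove_eq_sum_card_bipartiteBelow r
    _ ≤ #T * #{x ∈ U | r x y} := by
      rw [← smul_eq_mul]
      exact sum_le_card_nsmul _ _ _ fun z _ ↦ hy z (mem_univ z)

theorem natCard_setOf_and (p q : α → Prop) [DecidablePred p] [DecidablePred q] :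
    Nat.card {x | p x ∧ q x} = #{x ∈ ({x | p x} : Finset α) | q x} := by
  rw [Nat.card_eq_card_toFinset, Set.toFinset_ofPred, filter_filter]

end Counting

section RankMetric

variable (Fq : Type*) [Field Fq] {Fqm : Type*} [Field Fqm] [Algebra Fq Fqm] {n : ℕ}

theorem rankWeight_neg (x : Fin n → Fqm) : rankWeight Fq (-x) = rankWeight Fq x := by
  rw [rankWeight, rankWeight, ← Set.neg_range', Submodule.span_neg]

theorem rankWeight_sub_comm (x y : Fin n → Fqm) :
    rankWeight Fq (x - y) = rankWeight Fq (y - x) := by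
  rw [← rankWeight_neg, neg_sub]

theorem card_rankBall [Fintype Fqm] (ρ : ℕ) (x : Fin n → Fqm) :
    #{y | rankWeight Fq (x - y) ≤ ρ} = Nat.card {z : Fin n → Fqm // rankWeight Fq z ≤ ρ} := by
  rw [← Fintype.card_subtype, ← Nat.card_eq_fintype_card]
  exact Nat.card_congr ((Equiv.subLeft x).subtypeEquiv fun _ ↦ Iff.rfl)

end RankMetric

theorem stmt12_general (n ρ K B t : ℕ) (Fq Fqm : Type*) [Field Fq] [Field Fqm]
    [Fintype Fqm] [Algebra Fq Fqm]
    (hB : ∀ S : Finset (Fin n → Fqm), S.card ≤ K →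
      Nat.card {y : Fin n → Fqm | ∃ c ∈ S, rankWeight Fq (y - c) ≤ ρ} ≤ B)
    (C : Finset (Fin n → Fqm))
    (ht : Nat.card {x : Fin n → Fqm | ∀ c ∈ C, ρ < rankWeight Fq (x - c)} = t)
    (htK : t ≤ K) :
    ∃ y : Fin n → Fqm,
      (t * Nat.card {z : Fin n → Fqm // rankWeight Fq z ≤ ρ} + B - 1) / B ≤
        Nat.card {x : Fin n → Fqm |
          (∀ c ∈ C, ρ < rankWeight Fq (x - c)) ∧ rankWeight Fq (x - y) ≤ ρ} ∧
      Nat.card {x : Fin n → Fqm |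
          (∀ c ∈ C, ρ < rankWeight Fq (x - c)) ∧ ρ < rankWeight Fq (x - y)} ≤
        t - (t * Nat.card {z : Fin n → Fqm // rankWeight Fq z ≤ ρ} + B - 1) / B := by
  simp only [natCard_setOf_and, ← Nat.ceilDiv_eq_add_pred_div]
  set U : Finset (Fin n → Fqm) := {x | ∀ c ∈ C, ρ < rankWeight Fq (x - c)}
  have hU : #U = t := by rw [← ht, Nat.card_eq_card_toFinset, Set.toFinset_ofPred]
  obtain ⟨y, hy⟩ := exists_card_mul_le_card_nbhd_mul (fun x y ↦ rankWeight Fq (x - y) ≤ ρ)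
    (fun x y h ↦ by rwa [rankWeight_sub_comm] at h) U _ fun x _ ↦ card_rankBall Fq ρ x
  have hnbhd : #{z | ∃ u ∈ U, rankWeight Fq (z - u) ≤ ρ} ≤ B := by
    simpa only [Nat.card_eq_card_toFinset, Set.toFinset_ofPred] using hB U (hU ▸ htK)
  have hceil : t * Nat.card {z : Fin n → Fqm // rankWeight Fq z ≤ ρ} ⌈/⌉ B ≤
      #{x ∈ U | rankWeight Fq (x - y) ≤ ρ} := by
    rcases B.eq_zero_or_pos with rfl | hB0
    · simp
    · rw [ceilDiv_le_iff_le_smul hB0, smul_eq_mul, ← hU]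
      exact hy.trans (Nat.mul_le_mul_right _ hnbhd)
  have hsplit :
      #{x ∈ U | rankWeight Fq (x - y) ≤ ρ} + #{x ∈ U | ρ < rankWeight Fq (x - y)} = #U := by
    convert card_filter_add_card_filter_not (s := U) (fun x ↦ rankWeight Fq (x - y) ≤ ρ)
    simp only [not_le]
  exact ⟨y, hceil, by omega⟩

/-- If every collection of at most `K` balls of rank radius `ρ` has union of volume at most
`B`, and `C` leaves exactly `t ≤ K` vectors uncovered, then some vector `y` covers at least
`⌈t·v(ρ)/B⌉` uncovered vectors, so `C ∪ {y}` leaves at most `t - ⌈t·v(ρ)/B⌉` uncovered. -/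
theorem stmt12 (q m n ρ K B t : ℕ) (Fq Fqm : Type*) [Field Fq] [Fintype Fq] [Field Fqm]
    [Fintype Fqm] [Algebra Fq Fqm] (hq : Fintype.card Fq = q)
    (hm : Module.finrank Fq Fqm = m) (hnm : n ≤ m) (hρ : ρ ≤ n)
    (hB : ∀ S : Finset (Fin n → Fqm), S.card ≤ K →
      Nat.card {y : Fin n → Fqm | ∃ c ∈ S, rankWeight Fq (y - c) ≤ ρ} ≤ B)
    (C : Finset (Fin n → Fqm))
    (ht : Nat.card {x : Fin n → Fqm | ∀ c ∈ C, ρ < rankWeight Fq (x - c)} = t)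
    (htK : t ≤ K) :
    ∃ y : Fin n → Fqm,
      (t * Nat.card {z : Fin n → Fqm // rankWeight Fq z ≤ ρ} + B - 1) / B ≤
        Nat.card {x : Fin n → Fqm |
          (∀ c ∈ C, ρ < rankWeight Fq (x - c)) ∧ rankWeight Fq (x - y) ≤ ρ} ∧
      Nat.card {x : Fin n → Fqm |
          (∀ c ∈ C, ρ < rankWeight Fq (x - c)) ∧ ρ < rankWeight Fq (x - y)} ≤
        t - (t * Nat.card {z : Fin n → Fqm // rankWeight Fq z ≤ ρ} + B - 1) / B :=
  stmt12_general n ρ K B t Fq Fqm hB C ht htK
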